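/- Let H be a Hopf algebra over a field k and P = ΣP₁ ⊗ P₂ ∈ H ⊗ H. The following conditions are equivalent: (a) P · (S²⊗id)(Δ(h)) = Δ(h) · P for all h ∈ H, i.e. Σ P₁S²(h₍₁₎) ⊗ P₂h₍₂₎ = Σ h₍₁₎P₁ ⊗ h₍₂₎P₂; (b) (1⊗h) · P = Σ S(h₍₁₎)P₁S²(h₍₂₎) ⊗ P₂h₍₃₎ for all h ∈ H; (c) Σ S(h₍₁₎)P₁S²(h₍₂₎) ⊗ P₂ = Σ P₁ ⊗ h₍₁₎P₂S(h₍₂₎) for all h ∈ H. -/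

import Mathlib

/-!
All three conditions are identities in the convolution algebra of linear maps `H → H ⊗ H`.
Let `ℓ h = h ⊗ 1`, `𝓇 h = 1 ⊗ h` and `p = P • 1 : h ↦ ε(h) P`, so that `f * p * g` is
`h ↦ Σ f(h₍₁₎) P g(h₍₂₎)`. Being algebra maps, `ℓ` and `𝓇` are convolution-invertible with
inverses `ℓ ∘ S` and `𝓇 ∘ S`; moreover `Δ = ℓ * 𝓇` and `(S² ⊗ id) ∘ Δ = ℓS² * 𝓇`. The
conditions then read
  (a) `p * ℓS² * 𝓇 = ℓ * 𝓇 * p`,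
  (b) `𝓇 * p = ℓ⁻¹ * p * ℓS² * 𝓇`,
  (c) `ℓ⁻¹ * p * ℓS² = 𝓇 * p * 𝓇⁻¹`,
so (a) ⇔ (b) is left multiplication by `ℓ` and (b) ⇔ (c) is right multiplication by `𝓇`.
-/

open TensorProduct

noncomputable section

section HopfDefs

variable (k H : Type*) [Field k] [Ring H] [HopfAlgebra k H]

/-- The antipode, abbreviated. -/
def antip : H →ₗ[k] H := HopfAlgebra.antipode (R := k)

/-- The square of the antipode. -/
def antipSq : H →ₗ[k] H := antip k H ∘ₗ antip k H

/-- `sandwich (a ⊗ b)` is the linear endomorphism `x ↦ a * x * b` of `H`. -/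
def sandwich : H ⊗[k] H →ₗ[k] Module.End k H :=
  TensorProduct.lift
    (LinearMap.mk₂ k
      (fun a b => LinearMap.mulRight k b ∘ₗ LinearMap.mulLeft k a)
      (fun a a' b => by ext x; simp [add_mul])
      (fun c a b => by ext x; simp [smul_mul_assoc])
      (fun a b b' => by ext x; simp [mul_add])
      (fun c a b => by ext x; simp [mul_smul_comm]))

/-- `ad* h : x ↦ S(h₍₁₎) x S²(h₍₂₎)` (Sweedler sum understood). -/
def adStar (h : H) : Module.End k H :=
  sandwich k H (TensorProduct.map (antip k H) (antipSq k H) (Coalgebra.comul h))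

/-- `ad h : y ↦ h₍₁₎ y S(h₍₂₎)` (Sweedler sum understood). -/
def adAct (h : H) : Module.End k H :=
  sandwich k H (TensorProduct.map LinearMap.id (antip k H) (Coalgebra.comul h))

/-- For fixed `P = Σ P₁ ⊗ P₂ ∈ H ⊗ H`, the linear map sending
`(a ⊗ b) ⊗ c` to `Σ (a * P₁ * b) ⊗ (P₂ * c)`. -/
def thetaP (P : H ⊗[k] H) : (H ⊗[k] H) ⊗[k] H →ₗ[k] H ⊗[k] H :=
  TensorProduct.lift
    (LinearMap.mk₂ k
      (fun x c => TensorProduct.map (sandwich k H x) (LinearMap.mulRight k c) P)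
      (fun x x' c => by
        simp only [map_add, TensorProduct.map_add_left, LinearMap.add_apply])
      (fun r x c => by
        simp only [map_smul, TensorProduct.map_smul_left, LinearMap.smul_apply])
      (fun x c c' => by
        have h : LinearMap.mulRight k (c + c') =
            LinearMap.mulRight k c + LinearMap.mulRight k c' := by
          ext y; simp [mul_add]
        simp only [h, TensorProduct.map_add_right, LinearMap.add_apply])
      (fun r x c => by
        have h : LinearMap.mulRight k (r • c) = r • LinearMap.mulRight k c := by
          ext y; simp [mul_smul_comm]
        simp only [h, TensorProduct.map_smul_right, LinearMap.smul_apply]))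

/-- Condition (a): `P · (S²⊗id)(Δ h) = Δ h · P` for all `h`. -/
def CondA (P : H ⊗[k] H) : Prop :=
  ∀ h : H,
    P * TensorProduct.map (antipSq k H) LinearMap.id (Coalgebra.comul h) =
      Coalgebra.comul h * P

/-- Condition (b): `(1 ⊗ h) · P = Σ S(h₍₁₎) P₁ S²(h₍₂₎) ⊗ P₂ h₍₃₎` for all `h`. -/
def CondB (P : H ⊗[k] H) : Prop :=
  ∀ h : H,
    (1 ⊗ₜ[k] h) * P =
      thetaP k H P
        (TensorProduct.map (TensorProduct.map (antip k H) (antipSq k H)) LinearMap.id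
          (TensorProduct.map Coalgebra.comul LinearMap.id (Coalgebra.comul h)))

/-- Condition (c): `Σ S(h₍₁₎) P₁ S²(h₍₂₎) ⊗ P₂ = Σ P₁ ⊗ h₍₁₎ P₂ S(h₍₂₎)` for all `h`. -/
def CondC (P : H ⊗[k] H) : Prop :=
  ∀ h : H,
    TensorProduct.map (adStar k H h) LinearMap.id P =
      TensorProduct.map LinearMap.id (adAct k H h) P

end HopfDefs

open WithConv Coalgebra

namespace AlgHom

variable {R A : Type*} [CommSemiring R] [Semiring A] [Algebra R A]

lemma toLinearMap_comp_convOne {B C : Type*} [Semiring B] [Algebra R B] [AddCommMonoid C]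
    [Module R C] [Coalgebra R C] (φ : A →ₐ[R] B) :
    φ.toLinearMap ∘ₗ (1 : WithConv (C →ₗ[R] A)).ofConv = (1 : WithConv (C →ₗ[R] B)).ofConv := by
  ext; simp

variable {C : Type*} [Semiring C] [HopfAlgebra R C]

def convUnit (φ : C →ₐ[R] A) : (WithConv (C →ₗ[R] A))ˣ where
  val := toConv φ.toLinearMap
  inv := toConv (φ.toLinearMap ∘ₗ HopfAlgebra.antipode R)
  val_inv := by
    ext1
    rw [← toLinearMap_comp_convOne (C := C) φ, ← LinearMap.id_mul_antipode,
      LinearMap.algHom_comp_convMul_distrib]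
    rfl
  inv_val := by
    ext1
    rw [← toLinearMap_comp_convOne (C := C) φ, ← LinearMap.antipode_mul_id,
      LinearMap.algHom_comp_convMul_distrib]
    rfl

lemma val_convUnit (φ : C →ₐ[R] A) :
    (φ.convUnit : WithConv (C →ₗ[R] A)) = toConv φ.toLinearMap :=
  rfl

end AlgHom

namespace LinearMap

variable {R C A B : Type*} [CommSemiring R] [AddCommMonoid C] [Module R C] [Semiring A]
  [Algebra R A]

lemma includeLeft_comp_convMul_includeRight_comp [CoalgebraStruct R C] [Semiring B] [Algebra R B]
    (f : C →ₗ[R] A) (g : C →ₗ[R] B) :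
    toConv ((Algebra.TensorProduct.includeLeft : A →ₐ[R] A ⊗[R] B).toLinearMap ∘ₗ f) *
        toConv ((Algebra.TensorProduct.includeRight : B →ₐ[R] A ⊗[R] B).toLinearMap ∘ₗ g) =
      toConv (TensorProduct.map f g ∘ₗ comul) := by
  rw [convMul_def, ← comp_assoc]
  congr 2
  ext a b
  simp

variable [Coalgebra R C]

lemma smul_one_convMul (x : A) (f : WithConv (C →ₗ[R] A)) :
    x • 1 * f = toConv (mulLeft R x ∘ₗ f.ofConv) := by
  rw [smul_mul_assoc, one_mul]
  rfl

lemma convMul_smul_one (f : WithConv (C →ₗ[R] A)) (x : A) :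
    f * x • 1 = toConv (mulRight R x ∘ₗ f.ofConv) := by
  have hx : (x • 1 : WithConv (C →ₗ[R] A)) = toConv (toSpanSingleton R A x ∘ₗ counit) := by
    ext; simp [Algebra.smul_def, Algebra.commutes]
  ext c
  simp [hx, convMul_def, ← map_comp_lTensor]

end LinearMap

section HopfConditions

variable {k H : Type*} [Field k] [Ring H] [HopfAlgebra k H] (P : H ⊗[k] H)

local notation "ℓ" =>
  AlgHom.toLinearMap (Algebra.TensorProduct.includeLeft (R := k) (S := k) (A := H) (B := H))
local notation "𝓇" =>
  AlgHom.toLinearMap (Algebra.TensorProduct.includeRight (R := k) (A := H) (B := H))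
local notation "𝓛" =>
  AlgHom.convUnit (Algebra.TensorProduct.includeLeft (R := k) (S := k) (A := H) (B := H))
local notation "𝓡" =>
  AlgHom.convUnit (Algebra.TensorProduct.includeRight (R := k) (A := H) (B := H))

lemma map_sandwich_id (a b : H) :
    map (sandwich k H (a ⊗ₜ b)) LinearMap.id P = (a ⊗ₜ 1) * P * (b ⊗ₜ 1) := by
  induction P using TensorProduct.induction_on with
  | zero => simp
  | tmul p q => simp [sandwich]
  | add x y hx hy => simp_all [mul_add, add_mul]

lemma map_id_sandwich (a b : H) :
    map LinearMap.id (sandwich k H (a ⊗ₜ b)) P = (1 ⊗ₜ a) * P * (1 ⊗ₜ b) := by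
  induction P using TensorProduct.induction_on with
  | zero => simp
  | tmul p q => simp [sandwich]
  | add x y hx hy => simp_all [mul_add, add_mul]

lemma map_sandwich_mulRight (x : H ⊗[k] H) (c : H) :
    map (sandwich k H x) (LinearMap.mulRight k c) P =
      map (sandwich k H x) LinearMap.id P * (1 ⊗ₜ c) := by
  induction P using TensorProduct.induction_on with
  | zero => simp
  | tmul p q => simp
  | add p q hp hq => simp_all [add_mul]

lemma map_adStar_id (h : H) :
    map (adStar k H h) LinearMap.id P =
      (toConv (ℓ ∘ₗ antip k H) * P • 1 * toConv (ℓ ∘ₗ antipSq k H)) h := by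
  rw [LinearMap.convMul_smul_one, LinearMap.convMul_apply, adStar]
  induction comul (R := k) h using TensorProduct.induction_on with
  | zero => simp
  | tmul a b => simp [map_sandwich_id]
  | add x y hx hy => simp_all [map_add_left]

lemma map_id_adAct (h : H) :
    map LinearMap.id (adAct k H h) P = (toConv 𝓇 * P • 1 * toConv (𝓇 ∘ₗ antip k H)) h := by
  rw [LinearMap.convMul_smul_one, LinearMap.convMul_apply, adAct]
  induction comul (R := k) h using TensorProduct.induction_on with
  | zero => simp
  | tmul a b => simp [map_id_sandwich]
  | add x y hx hy => simp_all [map_add_right]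

lemma thetaP_map_comul (h : H) :
    thetaP k H P
        (map (map (antip k H) (antipSq k H)) LinearMap.id (map comul LinearMap.id (comul h))) =
      (toConv (ℓ ∘ₗ antip k H) * P • 1 * toConv (ℓ ∘ₗ antipSq k H) * toConv 𝓇) h := by
  rw [LinearMap.convMul_apply]
  induction comul (R := k) h using TensorProduct.induction_on with
  | zero => simp
  | tmul a b =>
    simp only [map_tmul, LinearMap.id_apply, thetaP, lift.tmul, LinearMap.mk₂_apply,
      map_sandwich_mulRight]
    rw [← adStar, map_adStar_id]
    rfl
  | add x y hx hy => simp_all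

lemma condA_iff :
    CondA k H P ↔ P • 1 * toConv (ℓ ∘ₗ antipSq k H) * 𝓡 = 𝓛 * 𝓡 * P • 1 := by
  have hcomul : toConv ℓ * toConv 𝓇 = toConv (comul : H →ₗ[k] H ⊗[k] H) := by
    simpa using LinearMap.includeLeft_comp_convMul_includeRight_comp (R := k) (C := H)
      LinearMap.id LinearMap.id
  have hS2 : toConv (ℓ ∘ₗ antipSq k H) * toConv 𝓇 =
      toConv (map (antipSq k H) LinearMap.id ∘ₗ comul) :=
    LinearMap.includeLeft_comp_convMul_includeRight_comp _ LinearMap.id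
  rw [AlgHom.val_convUnit, AlgHom.val_convUnit, hcomul, mul_assoc, hS2,
    LinearMap.smul_one_convMul, LinearMap.convMul_smul_one]
  simp only [CondA, WithConv.ext_iff, LinearMap.ext_iff]
  rfl

lemma condB_iff :
    CondB k H P ↔ 𝓡 * P • 1 = ↑𝓛⁻¹ * P • 1 * toConv (ℓ ∘ₗ antipSq k H) * 𝓡 := by
  rw [AlgHom.val_convUnit, LinearMap.convMul_smul_one (toConv 𝓇)]
  simp only [CondB, thetaP_map_comul, WithConv.ext_iff, LinearMap.ext_iff]
  rfl

lemma condC_iff :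
    CondC k H P ↔ ↑𝓛⁻¹ * P • 1 * toConv (ℓ ∘ₗ antipSq k H) = 𝓡 * P • 1 * ↑𝓡⁻¹ := by
  simp only [CondC, map_adStar_id, map_id_adAct, WithConv.ext_iff, LinearMap.ext_iff]
  rfl

end HopfConditions

theorem stmt12 (k H : Type*) [Field k] [Ring H] [HopfAlgebra k H] (P : H ⊗[k] H) :
    (CondA k H P ↔ CondB k H P) ∧ (CondB k H P ↔ CondC k H P) := by
  constructor
  · simp only [condA_iff, condB_iff, mul_assoc, Units.eq_inv_mul_iff_mul_eq]
    exact eq_comm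
  · rw [condB_iff, condC_iff, Units.eq_mul_inv_iff_mul_eq, eq_comm]
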